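/- Let g ≥ 1 and let k, l be integers with 1 ≤ k ≤ g and 1 ≤ l ≤ g. Then there exist a real 2g×2g matrix A satisfying AᵀJ_{2g}A = J_{2g} or AᵀJ_{2g}A = −J_{2g}, and an integer 2×2 matrix B of determinant 1 or −1, such that P_k · A = B · P_l (with B, P_k, P_l regarded as real matrices), if and only if k = l. -/

import Mathlib

open Matrix

/-- The block-diagonal `2g × 2g` matrix `J_{2g}` with `g` diagonal blocks equal
to `J = !![0,1;-1,0]`. -/
def Jmat (g : ℕ) : Matrix (Fin (2 * g)) (Fin (2 * g)) ℝ :=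
  Matrix.of fun i j =>
    if (i : ℕ) / 2 = (j : ℕ) / 2 then
      (if (i : ℕ) % 2 = 0 ∧ (j : ℕ) % 2 = 1 then 1
       else if (i : ℕ) % 2 = 1 ∧ (j : ℕ) % 2 = 0 then -1 else 0)
    else 0

/-- `P_k`, the `2 × 2g` matrix `(I I ⋯ I 0 ⋯ 0)` consisting of `k` copies of the
`2×2` identity matrix followed by `g - k` zero `2×2` blocks. -/
def Pmat (g k : ℕ) : Matrix (Fin 2) (Fin (2 * g)) ℝ :=
  Matrix.of fun i j => if (j : ℕ) < 2 * k ∧ (j : ℕ) % 2 = (i : ℕ) then 1 else 0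

open scoped Kronecker

/-! With `e_k = (1, …, 1, 0, …, 0) ∈ ℝ^g` one has `J_{2g} = I_g ⊗ J` and `P_k = e_kᵀ ⊗ I₂`, so
`P_k J_{2g} P_kᵀ = (e_kᵀ e_k) J = k J`. If `AᵀJ_{2g}A = εJ_{2g}` with `ε = ±1` then also
`A J_{2g} Aᵀ = εJ_{2g}`, and every `2 × 2` matrix satisfies `B J Bᵀ = (det B) J`. Conjugating
`J_{2g}` by both sides of `P_k A = B P_l` therefore gives `εk J = (det B) l J`, i.e. `k = ±l`,
which for natural numbers means `k = l`. -/

theorem mul_mul_transpose_eq_smul_of_transpose_mul_mul_eq_smul {R n : Type*} [CommRing R]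
    [Fintype n] [DecidableEq n] {J A : Matrix n n R} (hJ : J * J = -1) {c : R} (hc : IsUnit c)
    (h : Aᵀ * J * A = c • J) :
    A * J * Aᵀ = c • J := by
  obtain ⟨u, rfl⟩ := hc
  -- `-u⁻¹ J Aᵀ J` is a left inverse of `A`, hence also a right inverse.
  have hleft : (-(↑u⁻¹ : R) • (J * Aᵀ * J)) * A = 1 := by
    calc (-(↑u⁻¹ : R) • (J * Aᵀ * J)) * A = -(↑u⁻¹ : R) • (J * (Aᵀ * J * A)) := by
          simp only [Matrix.smul_mul, Matrix.mul_assoc]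
      _ = 1 := by rw [h, Matrix.mul_smul, smul_smul, hJ]; simp
  have hright : A * J * Aᵀ * J = -(u : R) • 1 := by
    have := congrArg (fun M => -(u : R) • M) (mul_eq_one_comm.mp hleft)
    simpa [Matrix.mul_smul, smul_smul, Matrix.mul_assoc] using this
  calc A * J * Aᵀ = -(A * J * Aᵀ * J * J) := by rw [Matrix.mul_assoc _ J J, hJ]; simp
    _ = (u : R) • J := by rw [hright]; simp

theorem mul_J_mul_transpose_eq_det_smul {R : Type*} [CommRing R] (B : Matrix (Fin 2) (Fin 2) R) :
    B * !![0, 1; -1, 0] * Bᵀ = B.det • !![0, 1; -1, 0] := by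
  ext i j
  fin_cases i <;> fin_cases j <;>
    simp [Matrix.mul_apply, Fin.sum_univ_two, Matrix.det_fin_two] <;> ring

/-- `blockEquiv g (a, r) = 2a + r`: entry `r` of the `a`-th `2 × 2` block. -/
def blockEquiv (g : ℕ) : Fin g × Fin 2 ≃ Fin (2 * g) :=
  finProdFinEquiv.trans (finCongr (Nat.mul_comm g 2))

def prefixIndicator (g k : ℕ) : Matrix Unit (Fin g) ℝ :=
  of fun _ a => if (a : ℕ) < k then 1 else 0

theorem Jmat_eq_one_kronecker (g : ℕ) :
    Jmat g = ((1 : Matrix (Fin g) (Fin g) ℝ) ⊗ₖ !![0, 1; -1, 0]).submatrix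
      (blockEquiv g).symm (blockEquiv g).symm := by
  ext i j
  obtain ⟨⟨a, r⟩, rfl⟩ := (blockEquiv g).surjective i
  obtain ⟨⟨b, s⟩, rfl⟩ := (blockEquiv g).surjective j
  fin_cases r <;> fin_cases s <;>
    simp [Jmat, blockEquiv, one_apply, Fin.ext_iff, show ∀ n : ℕ, (1 + 2 * n) / 2 = n by omega,
      eq_comm, neg_ite]

theorem Jmat_mul_self (g : ℕ) : Jmat g * Jmat g = -1 := by
  rw [Jmat_eq_one_kronecker, submatrix_mul_equiv, ← mul_kronecker_mul, Matrix.one_mul]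
  ext i j
  obtain ⟨⟨a, r⟩, rfl⟩ := (blockEquiv g).surjective i
  obtain ⟨⟨b, s⟩, rfl⟩ := (blockEquiv g).surjective j
  fin_cases r <;> fin_cases s <;> simp [one_apply]

theorem Pmat_eq_prefixIndicator_kronecker_one (g k : ℕ) :
    Pmat g k = (prefixIndicator g k ⊗ₖ (1 : Matrix (Fin 2) (Fin 2) ℝ)).submatrix
      (Equiv.punitProd (Fin 2)).symm (blockEquiv g).symm := by
  ext i j
  obtain ⟨⟨a, r⟩, rfl⟩ := (blockEquiv g).surjective j
  fin_cases i <;> fin_cases r <;>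
    simp [Pmat, prefixIndicator, blockEquiv, one_apply,
      show ∀ n m : ℕ, 1 + 2 * n < 2 * m ↔ n < m by omega]

theorem prefixIndicator_mul_transpose (g k : ℕ) (hk : k ≤ g) :
    prefixIndicator g k * (prefixIndicator g k)ᵀ = of fun _ _ => (k : ℝ) := by
  ext
  simp only [prefixIndicator, mul_apply, transpose_apply, of_apply, mul_ite, mul_one, mul_zero,
    ← ite_and, and_self]
  rw [Finset.sum_boole, Fin.card_filter_val_lt, min_eq_right hk]

theorem Pmat_mul_Jmat_mul_transpose (g k : ℕ) (hk : k ≤ g) :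
    Pmat g k * Jmat g * (Pmat g k)ᵀ = (k : ℝ) • !![0, 1; -1, 0] := by
  rw [Pmat_eq_prefixIndicator_kronecker_one, Jmat_eq_one_kronecker, transpose_submatrix,
    submatrix_mul_equiv, submatrix_mul_equiv, ← kroneckerMap_transpose, transpose_one,
    ← mul_kronecker_mul, ← mul_kronecker_mul, Matrix.mul_one, Matrix.mul_one, Matrix.one_mul,
    prefixIndicator_mul_transpose g k hk]
  ext i j
  simp

theorem mul_natCast_eq_det_mul_of_Pmat_mul_eq {g k l : ℕ} (hkg : k ≤ g) (hlg : l ≤ g)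
    {A : Matrix (Fin (2 * g)) (Fin (2 * g)) ℝ} {B : Matrix (Fin 2) (Fin 2) ℝ} {ε : ℝ}
    (hAJ : A * Jmat g * Aᵀ = ε • Jmat g) (hPA : Pmat g k * A = B * Pmat g l) :
    ε * k = B.det * l := by
  have hform : (ε * k) • !![(0 : ℝ), 1; -1, 0] = (B.det * l) • !![0, 1; -1, 0] :=
    calc (ε * k) • !![(0 : ℝ), 1; -1, 0]
        = Pmat g k * (A * Jmat g * Aᵀ) * (Pmat g k)ᵀ := by
          rw [hAJ, Matrix.mul_smul, Matrix.smul_mul, Pmat_mul_Jmat_mul_transpose g k hkg,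
            smul_smul]
      _ = (Pmat g k * A) * Jmat g * (Pmat g k * A)ᵀ := by
          simp only [transpose_mul, Matrix.mul_assoc]
      _ = B * (Pmat g l * Jmat g * (Pmat g l)ᵀ) * Bᵀ := by
          simp only [hPA, transpose_mul, Matrix.mul_assoc]
      _ = (B.det * l) • !![0, 1; -1, 0] := by
          rw [Pmat_mul_Jmat_mul_transpose g l hlg, Matrix.mul_smul, Matrix.smul_mul,
            mul_J_mul_transpose_eq_det_smul, smul_smul, mul_comm]
  simpa using congrFun (congrFun hform 0) 1

theorem exists_generalized_symplectic_intertwiner_iff_general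
    (g k l : ℕ) (hkg : k ≤ g) (hlg : l ≤ g) :
    (∃ (A : Matrix (Fin (2 * g)) (Fin (2 * g)) ℝ)
       (B : Matrix (Fin 2) (Fin 2) ℤ),
       (Aᵀ * Jmat g * A = Jmat g ∨ Aᵀ * Jmat g * A = -(Jmat g)) ∧
       (B.det = 1 ∨ B.det = -1) ∧
       Pmat g k * A = B.map (Int.cast : ℤ → ℝ) * Pmat g l) ↔ k = l := by
  constructor
  · rintro ⟨A, B, hA, hB, hPA⟩
    obtain ⟨ε, hε, hAJ⟩ : ∃ ε : ℝ, (ε = 1 ∨ ε = -1) ∧ A * Jmat g * Aᵀ = ε • Jmat g := by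
      rcases hA with h | h
      · exact ⟨1, .inl rfl, mul_mul_transpose_eq_smul_of_transpose_mul_mul_eq_smul
          (Jmat_mul_self g) isUnit_one (by rwa [one_smul])⟩
      · exact ⟨-1, .inr rfl, mul_mul_transpose_eq_smul_of_transpose_mul_mul_eq_smul
          (Jmat_mul_self g) isUnit_one.neg (by rwa [neg_one_smul])⟩
    have hkl := mul_natCast_eq_det_mul_of_Pmat_mul_eq hkg hlg hAJ hPA
    rw [← Int.cast_det] at hkl
    have hk : (0 : ℝ) ≤ k := k.cast_nonneg
    have hl : (0 : ℝ) ≤ l := l.cast_nonneg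
    rcases hε with rfl | rfl <;> rcases hB with hd | hd <;> rw [hd] at hkl <;>
      push_cast at hkl <;> exact_mod_cast (by linarith : (k : ℝ) = l)
  · rintro rfl
    exact ⟨1, 1, .inl (by simp), .inl det_one, by simp⟩

/-- For `g ≥ 1` and `1 ≤ k, l ≤ g`, there exist `A ∈ Sp^±(2g, ℝ)` and
`B ∈ GL(2, ℤ)` with `P_k · A = B · P_l` if and only if `k = l`. -/
theorem exists_generalized_symplectic_intertwiner_iff
    (g k l : ℕ) (hg : 1 ≤ g) (hk1 : 1 ≤ k) (hkg : k ≤ g) (hl1 : 1 ≤ l) (hlg : l ≤ g) :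
    (∃ (A : Matrix (Fin (2 * g)) (Fin (2 * g)) ℝ)
       (B : Matrix (Fin 2) (Fin 2) ℤ),
       (Aᵀ * Jmat g * A = Jmat g ∨ Aᵀ * Jmat g * A = -(Jmat g)) ∧
       (B.det = 1 ∨ B.det = -1) ∧
       Pmat g k * A = B.map (Int.cast : ℤ → ℝ) * Pmat g l) ↔ k = l :=
  exists_generalized_symplectic_intertwiner_iff_general g k l hkg hlg
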